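/- Let λ > 0 and K be a positive integer. Define F(ξ) = 1 - (1/2)[1 + erf((ξ - 0.5 - λ)/√(2λ))]. Then the function ξ ↦ F(ξ)^K is convex on the interval ξ ≥ λ + 0.5. -/

import Mathlib

/-!
On `[0, ∞)` the complementary error function `1 - erf` has derivative `-(2/√π) e^{-z²}`, which
increases there, so it is convex; it is also nonnegative, since `erf z ≤ 1` follows from the
Gaussian integral `∫_0^∞ e^{-t²} dt = √π/2`. The false-alarm probability is `½ (1 - erf)` composed
with an affine map sending `[λ + ½, ∞)` into `[0, ∞)`, hence a nonnegative convex function, and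
nonnegative convex functions have convex powers.
-/

/-- The Gauss error function `erf z = (2/√π) ∫_0^z e^{-t²} dt`. -/
noncomputable def erf (z : ℝ) : ℝ := (2 / Real.sqrt Real.pi) * ∫ t in (0:ℝ)..z, Real.exp (-t ^ 2)

open Set Real

lemma hasDerivAt_erf (z : ℝ) : HasDerivAt erf (2 / √π * exp (-z ^ 2)) z := by
  have hc : Continuous fun t : ℝ => exp (-t ^ 2) := by fun_prop
  exact (intervalIntegral.integral_hasDerivAt_right (hc.intervalIntegrable 0 z)
    (hc.stronglyMeasurableAtFilter _ _) hc.continuousAt).const_mul _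

lemma erf_le_one {z : ℝ} (hz : 0 ≤ z) : erf z ≤ 1 := by
  have hint : MeasureTheory.IntegrableOn (fun t : ℝ => exp (-t ^ 2)) (Ioi 0) := by
    simpa using (integrableOn_Ioi_exp_neg_mul_sq_iff (b := 1)).2 one_pos
  have hhalf : ∫ t in Ioi (0:ℝ), exp (-t ^ 2) = √π / 2 := by
    simpa using integral_gaussian_Ioi 1
  have hle : ∫ t in (0:ℝ)..z, exp (-t ^ 2) ≤ √π / 2 := by
    rw [intervalIntegral.integral_of_le hz, ← hhalf]
    refine MeasureTheory.setIntegral_mono_set hint ?_ ?_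
    · filter_upwards with t using (exp_pos _).le
    · filter_upwards with t ht using ht.1
  have hπ : 0 < √π := sqrt_pos.2 pi_pos
  calc erf z ≤ 2 / √π * (√π / 2) := mul_le_mul_of_nonneg_left hle (by positivity)
    _ = 1 := by field_simp

lemma convexOn_one_sub_erf : ConvexOn ℝ (Ici 0) fun z => 1 - erf z := by
  have hderiv (z : ℝ) : HasDerivAt (fun z => 1 - erf z) (-(2 / √π * exp (-z ^ 2))) z :=
    (hasDerivAt_erf z).const_sub 1
  have hdiff : Differentiable ℝ fun z => 1 - erf z := fun z => (hderiv z).differentiableAt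
  refine MonotoneOn.convexOn_of_deriv (convex_Ici 0) hdiff.continuous.continuousOn
    hdiff.differentiableOn ?_
  intro x hx y _ hxy
  rw [interior_Ici] at hx
  rw [(hderiv x).deriv, (hderiv y).deriv, neg_le_neg_iff]
  gcongr
  exact hx.le

lemma ConvexOn.comp_sub_div {g : ℝ → ℝ} (hg : ConvexOn ℝ (Ici 0) g) (c : ℝ) {σ : ℝ}
    (hσ : 0 ≤ σ) : ConvexOn ℝ (Ici c) fun x => g ((x - c) / σ) := by
  let A : ℝ →ᵃ[ℝ] ℝ := σ⁻¹ • (AffineMap.id ℝ ℝ - AffineMap.const ℝ ℝ c)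
  have hA (x : ℝ) : A x = (x - c) / σ := by simp [A, div_eq_inv_mul]
  refine ((hg.comp_affineMap A).subset ?_ (convex_Ici c)).congr fun x _ => by simp [hA]
  intro x hx
  simpa [hA] using div_nonneg (sub_nonneg.2 (mem_Ici.1 hx)) hσ

theorem Pfa_pow_convex_general (lam : ℝ) (K : ℕ) :
    ConvexOn ℝ (Set.Ici (lam + 0.5))
      (fun ξ : ℝ => (1 - (1 / 2) * (1 + erf ((ξ - 0.5 - lam) / Real.sqrt (2 * lam)))) ^ K) := by
  have hF : ConvexOn ℝ (Ici (lam + 0.5))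
      fun ξ => (1 / 2 : ℝ) • (1 - erf ((ξ - (lam + 0.5)) / √(2 * lam))) :=
    (convexOn_one_sub_erf.comp_sub_div _ (sqrt_nonneg _)).smul (by norm_num)
  have hF₀ : ∀ ξ ∈ Ici (lam + 0.5), 0 ≤ (1 / 2 : ℝ) • (1 - erf ((ξ - (lam + 0.5)) / √(2 * lam))) :=
    fun ξ hξ => smul_nonneg (by norm_num) <| sub_nonneg.2 <|
      erf_le_one (div_nonneg (sub_nonneg.2 (mem_Ici.1 hξ)) (sqrt_nonneg _))
  refine (hF.pow hF₀ K).congr fun ξ _ => ?_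
  simp only [Pi.pow_apply, smul_eq_mul, sub_sub, add_comm (0.5 : ℝ)]
  ring

theorem Pfa_pow_convex (lam : ℝ) (hlam : 0 < lam) (K : ℕ) (hK : 1 ≤ K) :
    ConvexOn ℝ (Set.Ici (lam + 0.5))
      (fun ξ : ℝ => (1 - (1 / 2) * (1 + erf ((ξ - 0.5 - lam) / Real.sqrt (2 * lam)))) ^ K) :=
  Pfa_pow_convex_general lam K
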